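/- arXiv:1607.01872 — 2 statements merged into one kernel-verified Lean document; each statement's English description precedes it below -/
import Mathlib

section
/- The matching produced by the MMQ algorithm is Pareto optimal among feasible matchings: there is no other feasible matching π' such that every user weakly prefers its base station under π' to its base station under π (with respect to its preference order), with at least one user strictly preferring π'. -/
/-- Load of base station `n` under a partial assignment `π`. -/
def bsLoad {M N : Type*} [Fintype M] [DecidableEq N] (π : M → Option N) (n : N) : ℕ :=
  (Finset.univ.filter (fun m => π m = some n)).card

/-- The MMQ (matching with minimum quotas) serial-dictatorship run: users are processed
in master-list order; while the number of remaining users exceeds the total unmet minimum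
quota (phase 1), each user goes to its most preferred (lowest `rank`) base station whose
load is below its maximum quota; once the remaining users exactly fill the unmet minimum
quotas (phase 2), each user goes to its most preferred base station whose load is below
its minimum quota. -/
noncomputable def mmqRun {M N : Type*} [Fintype M] [Fintype N] [DecidableEq M] [DecidableEq N]
    (qmin qmax : N → ℕ) (rank : M → N → ℕ) :
    List M → (M → Option N) → (M → Option N)
  | [], π => π
  | m :: rest, π =>
      let κ := bsLoad π
      let deficit := ∑ n : N, (qmin n - κ n)
      let allowed : Finset N :=
        if rest.length + 1 = deficit then Finset.univ.filter (fun n => κ n < qmin n)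
        else Finset.univ.filter (fun n => κ n < qmax n)
      match allowed.toList.argmin (rank m) with
      | some n => mmqRun qmin qmax rank rest (Function.update π m (some n))
      | none => mmqRun qmin qmax rank rest π

/-!
Serial dictatorship against a feasible competitor `π'`: by induction along the master list,
as long as every user processed so far got its station under `π'`, the next user is offered
that station as well, because the partial assignment extended by `π'` on the remaining users
is feasible. Hence weak domination by `π'` forces every user to get exactly its station under
`π'`, and no user can strictly prefer `π'`.
-/

open Finset

/-- The stations offered to the next user when `len` users come after it. -/
def mmqAllowed {M N : Type*} [Fintype M] [Fintype N] [DecidableEq N] (qmin qmax : N → ℕ)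
    (π : M → Option N) (len : ℕ) : Finset N :=
  if len + 1 = ∑ n : N, (qmin n - bsLoad π n) then ({n | bsLoad π n < qmin n} : Finset N)
  else ({n | bsLoad π n < qmax n} : Finset N)

section
variable {M N : Type*} [Fintype M] [Fintype N] [DecidableEq M] [DecidableEq N]
variable (qmin qmax : N → ℕ) (rank : M → N → ℕ)

theorem mmqRun_nil (π : M → Option N) : mmqRun qmin qmax rank [] π = π := by
  rw [mmqRun]

theorem mmqRun_cons (m : M) (rest : List M) (π : M → Option N) :
    mmqRun qmin qmax rank (m :: rest) π =
      match (mmqAllowed qmin qmax π rest.length).toList.argmin (rank m) with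
      | some n => mmqRun qmin qmax rank rest (Function.update π m (some n))
      | none => mmqRun qmin qmax rank rest π := by
  rw [mmqRun, mmqAllowed]

theorem mmqRun_apply_of_notMem {m : M} :
    ∀ {rest : List M} (π : M → Option N), m ∉ rest → mmqRun qmin qmax rank rest π m = π m
  | [], π, _ => by rw [mmqRun_nil]
  | a :: rest, π, hm => by
    rw [List.mem_cons, not_or] at hm
    rw [mmqRun_cons]
    split
    · rw [mmqRun_apply_of_notMem _ hm.2, Function.update_of_ne hm.1]
    · exact mmqRun_apply_of_notMem π hm.2

end

theorem List.exists_argmin_eq_some_le {α β : Type*} [LinearOrder β] {f : α → β} {l : List α}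
    {x : α} (hx : x ∈ l) : ∃ y, l.argmin f = some y ∧ f y ≤ f x := by
  cases hy : l.argmin f with
  | none => exact absurd (List.argmin_eq_none.1 hy) (List.ne_nil_of_mem hx)
  | some y => exact ⟨y, rfl, List.le_of_mem_argmin hx hy⟩

section
variable {M N : Type*} [Fintype M] [DecidableEq N]

theorem card_fiber_eq_bsLoad_add {π : M → Option N} {π' : M → N}
    (hπ : ∀ m n, π m = some n → π' m = n) (n : N) :
    #{m | π' m = n} = bsLoad π n + #{m | π m = none ∧ π' m = n} := by
  classical
  rw [bsLoad, ← card_union_of_disjoint]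
  · congr 1
    ext m
    cases h : π m with
    | none => simp [h]
    | some k => simp [h, hπ m k h]
  · refine disjoint_filter.2 fun m _ h ↦ ?_
    simp [h]

variable [Fintype N]

theorem sum_card_unassigned_fiber (π : M → Option N) (π' : M → N) :
    ∑ n, #{m | π m = none ∧ π' m = n} = #{m | π m = none} := by
  rw [card_eq_sum_card_fiberwise (f := π') (t := univ) fun _ _ ↦ mem_univ _]
  simp only [filter_filter]

/- In phase 1 the station `π' m` is below its maximum quota since `m` still has to join it; in
phase 2, were it at or above its minimum quota, the unmet minimum quota would be smaller than
the number of unassigned users. -/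
theorem mem_mmqAllowed {qmin qmax : N → ℕ} {π : M → Option N} {π' : M → N}
    (hfeas : ∀ n, qmin n ≤ #{m | π' m = n} ∧ #{m | π' m = n} ≤ qmax n)
    (hπ : ∀ m n, π m = some n → π' m = n) {m : M} (hm : π m = none) {len : ℕ}
    (hlen : #{m | π m = none} ≤ len + 1) : π' m ∈ mmqAllowed qmin qmax π len := by
  have hsplit := card_fiber_eq_bsLoad_add hπ
  have hpos : 0 < #{m' | π m' = none ∧ π' m' = π' m} := card_pos.2 ⟨m, by simp [hm]⟩
  unfold mmqAllowed
  split_ifs with hphase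
  · rw [mem_filter, and_iff_right (mem_univ _)]
    by_contra! hsat
    have : ∑ n, (qmin n - bsLoad π n) < ∑ n, #{m' | π m' = none ∧ π' m' = n} := by
      refine sum_lt_sum (fun n _ ↦ ?_) ⟨π' m, mem_univ _, ?_⟩
      · have := (hfeas n).1; have := hsplit n; omega
      · omega
    rw [sum_card_unassigned_fiber] at this
    omega
  · rw [mem_filter, and_iff_right (mem_univ _)]
    have := (hfeas (π' m)).2; have := hsplit (π' m); omega

end

section
variable {M N : Type*} [Fintype M] [Fintype N] [DecidableEq M] [DecidableEq N]
  {qmin qmax : N → ℕ} {rank : M → N → ℕ}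

theorem mmqRun_eq_of_le_rank (hrank : ∀ m, Function.Injective (rank m)) {π' : M → N}
    (hfeas : ∀ n, qmin n ≤ #{m | π' m = n} ∧ #{m | π' m = n} ≤ qmax n) :
    ∀ {rest : List M} {π : M → Option N}, rest.Nodup → (∀ m, π m = none ↔ m ∈ rest) →
      (∀ m n, π m = some n → π' m = n) →
      (∀ m n, mmqRun qmin qmax rank rest π m = some n → rank m (π' m) ≤ rank m n) →
      ∀ m n, mmqRun qmin qmax rank rest π m = some n → π' m = n
  | [], π, _, _, hπ, _ => by simpa only [mmqRun_nil] using hπ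
  | m :: rest, π, hnd, hnone, hπ, hle => by
    rw [List.nodup_cons] at hnd
    have hunassigned : #{m' | π m' = none} = rest.length + 1 := by
      rw [← List.length_cons, ← List.toFinset_card_of_nodup (List.nodup_cons.2 hnd)]
      congr 1
      ext m'
      simp [hnone]
    obtain ⟨n₀, hn₀, hrank_le⟩ := List.exists_argmin_eq_some_le (f := rank m)
      (mem_toList.2 (mem_mmqAllowed hfeas hπ ((hnone m).2 List.mem_cons_self) hunassigned.le))
    rw [mmqRun_cons, hn₀] at hle ⊢
    have hm_gets : mmqRun qmin qmax rank rest (Function.update π m (some n₀)) m = some n₀ := by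
      rw [mmqRun_apply_of_notMem _ _ _ _ hnd.1, Function.update_self]
    have hπ'm : π' m = n₀ := hrank m ((hle m n₀ hm_gets).antisymm hrank_le)
    refine mmqRun_eq_of_le_rank hrank hfeas hnd.2 (fun m' ↦ ?_) (fun m' n ↦ ?_) hle
    · rcases eq_or_ne m' m with rfl | hm'
      · simp [hnd.1]
      · rw [Function.update_of_ne hm', hnone, List.mem_cons, or_iff_right hm']
    · rcases eq_or_ne m' m with rfl | hm'
      · simp [hπ'm]
      · rw [Function.update_of_ne hm']
        exact hπ m' n

end

theorem mmq_pareto_optimal_general {M N : Type*} [Fintype M] [Fintype N]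
    [DecidableEq M] [DecidableEq N]
    (qmin qmax : N → ℕ) (rank : M → N → ℕ)
    (hrank : ∀ m : M, Function.Injective (rank m))
    (ml : List M) (hml : ml.Nodup) (hfull : ∀ m : M, m ∈ ml) :
    ¬ ∃ π' : M → N,
      (∀ n : N, qmin n ≤ (Finset.univ.filter (fun m => π' m = n)).card ∧
        (Finset.univ.filter (fun m => π' m = n)).card ≤ qmax n) ∧
      (∀ (m : M) (n : N), mmqRun qmin qmax rank ml (fun _ => none) m = some n →
        rank m (π' m) ≤ rank m n) ∧
      (∃ (m : M) (n : N), mmqRun qmin qmax rank ml (fun _ => none) m = some n ∧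
        rank m (π' m) < rank m n) := by
  rintro ⟨π', hfeas, hle, m, n, hmn, hlt⟩
  have hagree := mmqRun_eq_of_le_rank hrank hfeas hml (by simp [hfull]) (by simp) hle m n hmn
  exact hlt.ne (congrArg (rank m) hagree)

/-- The MMQ outcome is Pareto optimal among feasible matchings: no feasible matching `π'`
weakly improves every user's base station (w.r.t. its preference ranking, lower `rank`
being better) while strictly improving some user's. -/
theorem mmq_pareto_optimal {M N : Type*} [Fintype M] [Fintype N]
    [DecidableEq M] [DecidableEq N]
    (qmin qmax : N → ℕ) (rank : M → N → ℕ)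
    (hrank : ∀ m : M, Function.Injective (rank m))
    (hq : ∀ n, qmin n ≤ qmax n)
    (hlow : ∑ n : N, qmin n ≤ Fintype.card M)
    (hhigh : Fintype.card M ≤ ∑ n : N, qmax n)
    (ml : List M) (hml : ml.Nodup) (hfull : ∀ m : M, m ∈ ml) :
    ¬ ∃ π' : M → N,
      (∀ n : N, qmin n ≤ (Finset.univ.filter (fun m => π' m = n)).card ∧
        (Finset.univ.filter (fun m => π' m = n)).card ≤ qmax n) ∧
      (∀ (m : M) (n : N), mmqRun qmin qmax rank ml (fun _ => none) m = some n →
        rank m (π' m) ≤ rank m n) ∧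
      (∃ (m : M) (n : N), mmqRun qmin qmax rank ml (fun _ => none) m = some n ∧
        rank m (π' m) < rank m n) :=
  mmq_pareto_optimal_general qmin qmax rank hrank ml hml hfull
end

section
/- The matching produced by the MMQ algorithm is two-sided stable when all base stations rank users by the common master list ≻_ML: there is no user-base-station pair (m, n) with π(m) ≠ n such that n ≻_m π(m) and m ≻_ML m' for some m' ∈ π⁻¹(n). -/
/-!
Call a base station `n` *closed* when it is at its maximum quota, or when the algorithm is
in its second phase and `n` has met its minimum quota. A closed station is never allowed
again: loads only grow, and in the second phase every step fills one unit of the deficit,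
so the second phase persists. If user `m` prefers `n` to the station `m` received, then `n`
was not allowed, hence closed, when `m` chose; so no user after `m` in the master list
obtains `n`.
-/

theorem List.mem_of_idxOf_lt_idxOf {α : Type*} [DecidableEq α] {l₁ l₂ : List α} {a b : α}
    (ha : a ∉ l₁) (hb : b ∈ l₁ ++ a :: l₂)
    (h : (l₁ ++ a :: l₂).idxOf a < (l₁ ++ a :: l₂).idxOf b) : b ∈ l₂ := by
  rw [List.idxOf_append_of_notMem ha, List.idxOf_cons_self] at h
  by_cases hb₁ : b ∈ l₁
  · rw [List.idxOf_append_of_mem hb₁] at h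
    exact absurd (List.idxOf_lt_length_of_mem hb₁) (by omega)
  · rcases List.mem_cons.mp ((List.mem_append.mp hb).resolve_left hb₁) with rfl | hb₂
    · rw [List.idxOf_append_of_notMem ha, List.idxOf_cons_self] at h
      omega
    · exact hb₂

namespace MMQ

variable {M N : Type*}

theorem update_eq_none_of_mem_tail [DecidableEq M] {a : M} {l : List M} (hnd : (a :: l).Nodup)
    {π : M → Option N} (hnone : ∀ x ∈ a :: l, π x = none) (o : Option N) :
    ∀ x ∈ l, Function.update π a o x = none := fun x hx => by
  rw [Function.update_of_ne (ne_of_mem_of_not_mem hx (List.nodup_cons.mp hnd).1)]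
  exact hnone x (List.mem_cons_of_mem a hx)

variable [Fintype M] [DecidableEq N]

section Load

variable [DecidableEq M]

theorem bsLoad_update_of_ne {π : M → Option N} {m : M} {o : Option N} {n : N}
    (hπ : π m ≠ some n) (ho : o ≠ some n) :
    bsLoad (Function.update π m o) n = bsLoad π n := by
  unfold bsLoad
  congr 1
  refine Finset.filter_congr fun x _ => ?_
  rcases eq_or_ne x m with rfl | hx
  · simp [hπ, ho]
  · rw [Function.update_of_ne hx]

theorem bsLoad_update_some_self {π : M → Option N} {m : M} (hm : π m = none) (n : N) :
    bsLoad (Function.update π m (some n)) n = bsLoad π n + 1 := by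
  unfold bsLoad
  have : Finset.univ.filter (fun x => Function.update π m (some n) x = some n)
      = insert m (Finset.univ.filter (fun x => π x = some n)) := by
    ext x
    rcases eq_or_ne x m with rfl | hx
    · simp
    · simp [hx]
  rw [this, Finset.card_insert_of_notMem (by simp [hm])]

end Load

variable [Fintype N] (qmin qmax : N → ℕ)

def deficit (π : M → Option N) : ℕ :=
  ∑ n : N, (qmin n - bsLoad π n)

/-- `k` counts the users still to be processed, the current one included. -/
def allowed (π : M → Option N) (k : ℕ) : Finset N :=
  if k = deficit qmin π then Finset.univ.filter (fun n => bsLoad π n < qmin n)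
  else Finset.univ.filter (fun n => bsLoad π n < qmax n)

def Closed (π : M → Option N) (k : ℕ) (n : N) : Prop :=
  qmax n ≤ bsLoad π n ∨ (k = deficit qmin π ∧ qmin n ≤ bsLoad π n)

variable {qmin qmax}

theorem closed_of_notMem_allowed {π : M → Option N} {k : ℕ} {n : N}
    (hn : n ∉ allowed qmin qmax π k) : Closed qmin qmax π k n := by
  unfold allowed at hn
  split_ifs at hn with hk <;>
    simp only [Finset.mem_filter, Finset.mem_univ, true_and, not_lt] at hn
  exacts [Or.inr ⟨hk, hn⟩, Or.inl hn]

theorem Closed.notMem_allowed (hq : ∀ n, qmin n ≤ qmax n) {π : M → Option N} {k : ℕ}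
    {n : N} (h : Closed qmin qmax π k n) : n ∉ allowed qmin qmax π k := by
  unfold allowed
  split_ifs with hk <;> simp only [Finset.mem_filter, Finset.mem_univ, true_and, not_lt]
  · rcases h with h | ⟨-, h⟩
    exacts [(hq n).trans h, h]
  · rcases h with h | ⟨hk', -⟩
    exacts [h, absurd hk' hk]

theorem Closed.argmin_allowed_ne (hq : ∀ n, qmin n ≤ qmax n) {π : M → Option N} {k : ℕ}
    {n : N} (h : Closed qmin qmax π k n) (f : N → ℕ) :
    (allowed qmin qmax π k).toList.argmin f ≠ some n :=
  fun hn => h.notMem_allowed hq (Finset.mem_toList.mp (List.argmin_mem hn))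

variable [DecidableEq M] {rank : M → N → ℕ}

theorem deficit_update_some {π : M → Option N} {m : M} (hm : π m = none) {c : N}
    (hc : bsLoad π c < qmin c) :
    deficit qmin (Function.update π m (some c)) = deficit qmin π - 1 := by
  unfold deficit
  rw [← Finset.add_sum_erase _ _ (Finset.mem_univ c),
    ← Finset.add_sum_erase _ (fun k => qmin k - bsLoad π k) (Finset.mem_univ c),
    bsLoad_update_some_self hm]
  have hrest : ∑ k ∈ Finset.univ.erase c, (qmin k - bsLoad (Function.update π m (some c)) k)
      = ∑ k ∈ Finset.univ.erase c, (qmin k - bsLoad π k) :=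
    Finset.sum_congr rfl fun k hk => by
      rw [bsLoad_update_of_ne (by simp [hm]) (by simpa using (Finset.ne_of_mem_erase hk).symm)]
  omega

theorem Closed.update_argmin (hq : ∀ n, qmin n ≤ qmax n) {π : M → Option N} {k : ℕ} {n : N}
    (h : Closed qmin qmax π (k + 1) n) {m : M} (hm : π m = none) (f : N → ℕ) :
    Closed qmin qmax
      (Function.update π m ((allowed qmin qmax π (k + 1)).toList.argmin f)) k n := by
  have hload := bsLoad_update_of_ne (π := π) (m := m) (by simp [hm]) (h.argmin_allowed_ne hq f)
  rcases h with hmax | ⟨hk, hmin⟩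
  · exact Or.inl (hload ▸ hmax)
  · -- in the second phase the deficit is positive, so some station is allowed and is chosen
    obtain ⟨c, -, hc⟩ := Finset.exists_ne_zero_of_sum_ne_zero (s := Finset.univ)
      (f := fun n => qmin n - bsLoad π n) (by unfold deficit at hk; omega)
    have hcmem : c ∈ allowed qmin qmax π (k + 1) := by
      simp only [allowed, if_pos hk, Finset.mem_filter, Finset.mem_univ, true_and]
      omega
    obtain ⟨c', hc'⟩ := Option.ne_none_iff_exists'.mp <| mt (List.argmin_eq_none (f := f)).mp <|
      Finset.toList_eq_nil.not.mpr (Finset.ne_empty_of_mem hcmem)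
    have hc'mem := Finset.mem_toList.mp (List.argmin_mem (f := f) hc')
    simp only [allowed, if_pos hk, Finset.mem_filter, Finset.mem_univ, true_and] at hc'mem
    refine Or.inr ⟨?_, hload ▸ hmin⟩
    rw [hc', deficit_update_some hm hc'mem]
    omega

theorem mmqRun_cons (m : M) (rest : List M) (π : M → Option N) :
    mmqRun qmin qmax rank (m :: rest) π =
      match (allowed qmin qmax π (rest.length + 1)).toList.argmin (rank m) with
      | some n => mmqRun qmin qmax rank rest (Function.update π m (some n))
      | none => mmqRun qmin qmax rank rest π := by
  rw [mmqRun, allowed, deficit]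

theorem mmqRun_cons_of_eq_none {m : M} (rest : List M) {π : M → Option N} (hm : π m = none) :
    mmqRun qmin qmax rank (m :: rest) π = mmqRun qmin qmax rank rest
      (Function.update π m ((allowed qmin qmax π (rest.length + 1)).toList.argmin (rank m))) := by
  rw [mmqRun_cons]
  split <;> rename_i h <;> rw [h]
  rw [Function.update_eq_self_iff.mpr hm.symm]

theorem exists_mmqRun_cons_eq (a : M) (rest : List M) (π : M → Option N) :
    ∃ π' : M → Option N,
      mmqRun qmin qmax rank (a :: rest) π = mmqRun qmin qmax rank rest π' ∧
        ∀ x ≠ a, π' x = π x := by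
  rw [mmqRun_cons]
  rcases (allowed qmin qmax π (rest.length + 1)).toList.argmin (rank a) with _ | c
  · exact ⟨π, rfl, fun _ _ => rfl⟩
  · exact ⟨_, rfl, fun x hx => Function.update_of_ne hx _ _⟩

theorem mmqRun_of_notMem {l : List M} {m : M} (hm : m ∉ l) (π : M → Option N) :
    mmqRun qmin qmax rank l π m = π m := by
  induction l generalizing π with
  | nil => rfl
  | cons a rest ih =>
    obtain ⟨π', hrun, hπ'⟩ := exists_mmqRun_cons_eq a rest π
    rw [hrun, ih (List.not_mem_of_not_mem_cons hm), hπ' m (List.ne_of_not_mem_cons hm)]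

theorem exists_mmqRun_append_eq (l₁ l₂ : List M) (π : M → Option N) :
    ∃ σ : M → Option N,
      mmqRun qmin qmax rank (l₁ ++ l₂) π = mmqRun qmin qmax rank l₂ σ ∧
        ∀ x ∉ l₁, σ x = π x := by
  induction l₁ generalizing π with
  | nil => exact ⟨π, rfl, fun _ _ => rfl⟩
  | cons a rest ih =>
    obtain ⟨π', hrun, hπ'⟩ := exists_mmqRun_cons_eq a (rest ++ l₂) π
    obtain ⟨σ, hrun', hσ⟩ := ih π'
    refine ⟨σ, hrun.trans hrun', fun x hx => ?_⟩
    rw [hσ x (List.not_mem_of_not_mem_cons hx), hπ' x (List.ne_of_not_mem_cons hx)]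

theorem mmqRun_ne_of_closed (hq : ∀ n, qmin n ≤ qmax n) {n : N} {m' : M} :
    ∀ {l : List M} {π : M → Option N}, l.Nodup → (∀ x ∈ l, π x = none) →
      Closed qmin qmax π l.length n → π m' ≠ some n →
        mmqRun qmin qmax rank l π m' ≠ some n
  | [], _, _, _, _, hm' => hm'
  | a :: rest, π, hnd, hnone, hclosed, hm' => by
    have ha := hnone a List.mem_cons_self
    rw [mmqRun_cons_of_eq_none rest ha]
    refine mmqRun_ne_of_closed hq hnd.of_cons (update_eq_none_of_mem_tail hnd hnone _)
      (hclosed.update_argmin hq ha _) ?_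
    rw [Function.update_apply]
    split_ifs
    exacts [hclosed.argmin_allowed_ne hq _, hm']

theorem mmqRun_cons_ne_of_rank_lt (hq : ∀ n, qmin n ≤ qmax n) {m m' : M} {l : List M}
    {π : M → Option N} (hnd : (m :: l).Nodup) (hnone : ∀ x ∈ m :: l, π x = none) {n n0 : N}
    (hm : mmqRun qmin qmax rank (m :: l) π m = some n0) (hrank : rank m n < rank m n0)
    (hm' : m' ∈ l) : mmqRun qmin qmax rank (m :: l) π m' ≠ some n := by
  have hπm := hnone m List.mem_cons_self
  rw [mmqRun_cons_of_eq_none l hπm] at hm ⊢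
  rw [mmqRun_of_notMem (List.nodup_cons.mp hnd).1, Function.update_self] at hm
  have hn : n ∉ allowed qmin qmax π (l.length + 1) := fun hn =>
    (List.le_of_mem_argmin (Finset.mem_toList.mpr hn) hm).not_gt hrank
  have hnone' := update_eq_none_of_mem_tail hnd hnone
    ((allowed qmin qmax π (l.length + 1)).toList.argmin (rank m))
  refine mmqRun_ne_of_closed hq hnd.of_cons hnone'
    ((closed_of_notMem_allowed hn).update_argmin hq hπm _) ?_
  simp [hnone' m' hm']

end MMQ

theorem mmq_stable_general {M N : Type*} [Fintype M] [Fintype N]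
    [DecidableEq M] [DecidableEq N]
    (qmin qmax : N → ℕ) (rank : M → N → ℕ)
    (hq : ∀ n, qmin n ≤ qmax n)
    (ml : List M) (hml : ml.Nodup) (hfull : ∀ m : M, m ∈ ml) :
    ¬ ∃ (m : M) (n : N),
      mmqRun qmin qmax rank ml (fun _ => none) m ≠ some n ∧
      (∃ n0 : N, mmqRun qmin qmax rank ml (fun _ => none) m = some n0 ∧
        rank m n < rank m n0) ∧
      (∃ m' : M, mmqRun qmin qmax rank ml (fun _ => none) m' = some n ∧
        ml.idxOf m < ml.idxOf m') := by
  rintro ⟨m, n, -, ⟨n0, hm, hrank⟩, m', hm', hidx⟩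
  obtain ⟨l₁, l₂, rfl⟩ := List.append_of_mem (hfull m)
  have hdisj := List.disjoint_of_nodup_append hml
  have hm'l₂ : m' ∈ l₂ :=
    List.mem_of_idxOf_lt_idxOf (fun h => hdisj h List.mem_cons_self) (hfull m') hidx
  obtain ⟨σ, hrun, hσ⟩ := MMQ.exists_mmqRun_append_eq (qmin := qmin) (qmax := qmax)
    (rank := rank) l₁ (m :: l₂) (fun _ => none)
  rw [hrun] at hm hm'
  exact MMQ.mmqRun_cons_ne_of_rank_lt hq hml.of_append_right
    (fun x hx => hσ x (fun h => hdisj h hx)) hm hrank hm'l₂ hm'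

/-- The MMQ outcome is two-sided stable when all base stations rank users by the common
master list (earlier in the list `ml` = higher priority): there is no pair `(m, n)` with
`π m ≠ some n`, `m` strictly preferring `n` to its own base station, and some `m'`
matched to `n` with `m` preceding `m'` in the master list. -/
theorem mmq_stable {M N : Type*} [Fintype M] [Fintype N]
    [DecidableEq M] [DecidableEq N]
    (qmin qmax : N → ℕ) (rank : M → N → ℕ)
    (hrank : ∀ m : M, Function.Injective (rank m))
    (hq : ∀ n, qmin n ≤ qmax n)
    (hlow : ∑ n : N, qmin n ≤ Fintype.card M)
    (hhigh : Fintype.card M ≤ ∑ n : N, qmax n)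
    (ml : List M) (hml : ml.Nodup) (hfull : ∀ m : M, m ∈ ml) :
    ¬ ∃ (m : M) (n : N),
      mmqRun qmin qmax rank ml (fun _ => none) m ≠ some n ∧
      (∃ n0 : N, mmqRun qmin qmax rank ml (fun _ => none) m = some n0 ∧
        rank m n < rank m n0) ∧
      (∃ m' : M, mmqRun qmin qmax rank ml (fun _ => none) m' = some n ∧
        ml.idxOf m < ml.idxOf m') :=
  mmq_stable_general qmin qmax rank hq ml hml hfull
end
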